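/- arXiv:1703.03896 — 2 statements merged into one kernel-verified Lean document; each statement's English description precedes it below -/
import Mathlib

section
/- Let c ≥ 2, k ≥ 4 and n be integers with n ≥ ck², and let F be a family of k-element subsets of [n] such that every x ∈ [n] satisfies d_F(x) > C(n−2, k−2) − C(n−k−2, k−2). Then c · |F| > (c−1)(k−2) · C(n−2, k−2). -/
/-!
Double counting incidences gives `n · (C(n-2,k-2) - C(n-k-2,k-2)) < k|F|`, and by Pascal's rule
`C(n-2,k-2) - C(n-k-2,k-2) ≥ k · C(n-k-2,k-3)`. A union bound (the `(k-3)`-subsets of `[n-3]`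
meeting a fixed `(k-1)`-set number at most `(k-1) C(n-4,k-4) = (k-1)(k-3)/(n-3) · C(n-3,k-3)`)
gives `C(n-k-2,k-3) ≥ (1 - 1/c) C(n-3,k-3)` because `c(k-1)(k-3) ≤ n-3`. Finally
`(n-2) C(n-3,k-3) = (k-2) C(n-2,k-2)`.
-/

namespace Nat

theorem choose_add_mul_choose_le_choose_add (a r t : ℕ) :
    choose a (r + 1) + t * choose a r ≤ choose (a + t) (r + 1) := by
  induction t with
  | zero => simp
  | succ t ih =>
    have hmono := choose_le_choose r (show a ≤ a + t by omega)
    rw [← add_assoc, choose_succ_succ' (a + t) r]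
    linarith

theorem choose_add_le_choose_add_mul_choose (a r t : ℕ) :
    choose (a + t) (r + 1) ≤ choose a (r + 1) + t * choose (a + t - 1) r := by
  induction t with
  | zero => simp
  | succ t ih =>
    have hmono := choose_le_choose r (show a + t - 1 ≤ a + t by omega)
    rw [← add_assoc, choose_succ_succ' (a + t) r, show a + t + 1 - 1 = a + t by omega]
    nlinarith

theorem sub_one_mul_choose_le_mul_choose_sub {c m r t : ℕ} (h : c * (t * r) ≤ m) :
    (c - 1) * choose m r ≤ c * choose (m - t) r := by
  rcases r with _ | r
  · simp
  obtain rfl | ⟨d, rfl⟩ : c = 0 ∨ ∃ d, c = d + 1 := by cases c <;> simp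
  · simp
  rcases Nat.eq_zero_or_pos m with rfl | hm
  · simp
  have htm : t ≤ m :=
    ((Nat.le_mul_of_pos_right t r.succ_pos).trans (Nat.le_mul_of_pos_left _ d.succ_pos)).trans h
  have hunion := choose_add_le_choose_add_mul_choose (m - t) r t
  rw [Nat.sub_add_cancel htm] at hunion
  have habsorb : m * choose (m - 1) r = choose m (r + 1) * (r + 1) := by
    simpa [Nat.sub_add_cancel hm] using add_one_mul_choose_eq (m - 1) r
  have key : m * (d * choose m (r + 1)) ≤ m * ((d + 1) * choose (m - t) (r + 1)) := by
    have hscaled : (d + 1) * (m * choose m (r + 1))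
        ≤ (d + 1) * (m * choose (m - t) (r + 1)) + (d + 1) * (t * (r + 1)) * choose m (r + 1) := by
      calc (d + 1) * (m * choose m (r + 1))
          ≤ (d + 1) * (m * (choose (m - t) (r + 1) + t * choose (m - 1) r)) := by gcongr
        _ = _ := by rw [mul_add, mul_left_comm m t, habsorb]; ring
    have hbound := Nat.mul_le_mul_right (choose m (r + 1)) h
    nlinarith
  simpa using Nat.le_of_mul_le_mul_left key hm

theorem mul_choose_le_mul_choose_sub_choose {c k n : ℕ} (hc : 0 < c) (hk : 4 ≤ k)
    (hn : c * k ^ 2 ≤ n) :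
    k * ((c - 1) * (k - 2) * choose (n - 2) (k - 2)) ≤
      c * n * (choose (n - 2) (k - 2) - choose (n - k - 2) (k - 2)) := by
  set B := choose (n - 2) (k - 2)
  set W := choose (n - k - 2) (k - 2)
  set X := choose (n - 3) (k - 3)
  set Z := choose (n - k - 2) (k - 3)
  have hnk : 2 * k + 2 ≤ n := by nlinarith
  have hpascal : W + k * Z ≤ B := by
    have := choose_add_mul_choose_le_choose_add (n - k - 2) (k - 3) k
    rwa [show k - 3 + 1 = k - 2 by omega, show n - k - 2 + k = n - 2 by omega] at this
  have hratio : (c - 1) * X ≤ c * Z := by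
    have hspread : c * ((k - 1) * (k - 3)) ≤ n - 3 := by
      obtain ⟨j, rfl⟩ : ∃ j, k = j + 4 := ⟨k - 4, by omega⟩
      simp only [show j + 4 - 1 = j + 3 by omega, show j + 4 - 3 = j + 1 by omega]
      have : c * ((j + 3) * (j + 1)) + 3 ≤ c * (j + 4) ^ 2 := by nlinarith
      omega
    have := sub_one_mul_choose_le_mul_choose_sub hspread
    rwa [show n - 3 - (k - 1) = n - k - 2 by omega] at this
  have habsorb : (n - 2) * X = B * (k - 2) := by
    have := add_one_mul_choose_eq (n - 3) (k - 3)
    rwa [show n - 3 + 1 = n - 2 by omega, show k - 3 + 1 = k - 2 by omega] at this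
  calc k * ((c - 1) * (k - 2) * B) = k * (c - 1) * (B * (k - 2)) := by ring
    _ = k * ((c - 1) * X) * (n - 2) := by rw [← habsorb]; ring
    _ ≤ k * (c * Z) * (n - 2) := by gcongr
    _ = c * (n - 2) * (k * Z) := by ring
    _ ≤ c * n * (B - W) := by gcongr <;> omega

end Nat

/-- Estimate (2): if `c ≥ 2`, `k ≥ 4`, `n ≥ ck²` and every vertex of `[n]` has degree
greater than `C(n-2,k-2) - C(n-k-2,k-2)` in a family `F` of `k`-subsets of `[n]`, then
`c · |F| > (c-1)(k-2) · C(n-2,k-2)`. -/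
theorem family_size_lower_bound (c k n : ℕ) (hc : 2 ≤ c) (hk : 4 ≤ k)
    (hn : c * k ^ 2 ≤ n)
    (F : Finset (Finset (Fin n)))
    (huniform : ∀ A ∈ F, A.card = k)
    (hdelta : ∀ x : Fin n,
      Nat.choose (n - 2) (k - 2) - Nat.choose (n - k - 2) (k - 2) <
        (F.filter (fun A => x ∈ A)).card) :
    (c - 1) * (k - 2) * Nat.choose (n - 2) (k - 2) < c * F.card := by
  set D := Nat.choose (n - 2) (k - 2) - Nat.choose (n - k - 2) (k - 2)
  have hcount : n * (D + 1) ≤ F.card * k := by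
    have := Finset.le_sum_card (B := F) fun x => hdelta x
    rwa [Fintype.card_fin, Finset.sum_congr rfl huniform, Finset.sum_const, smul_eq_mul] at this
  have hn0 : 0 < n := by nlinarith
  refine Nat.lt_of_mul_lt_mul_left (a := k) ?_
  calc k * ((c - 1) * (k - 2) * Nat.choose (n - 2) (k - 2))
      ≤ c * n * D := Nat.mul_choose_le_mul_choose_sub_choose (by omega) hk hn
    _ < c * (n * (D + 1)) := by
        rw [← mul_assoc, mul_add_one]
        exact Nat.lt_add_of_pos_right (Nat.mul_pos (by omega) hn0)
    _ ≤ c * (F.card * k) := by gcongr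
    _ = k * (c * F.card) := by ring
end

section
/- Let k ≥ 4 and n ≥ 4k², and let F be a maximal non-trivial intersecting family of k-element subsets of [n] with δ(F) > C(n−2, k−2) − C(n−k−2, k−2). Then the kernel of F contains at most one 2-element set, i.e., |K₂| ≤ 1. -/
/-!
Two distinct 2-element members of the kernel meet: otherwise a `k`-set containing one of them
and avoiding the other lies in `F` by maximality, yet misses a cover. So they are `{a, b}` and
`{a, c}`, and minimality of `{a, b}` gives `A₀ ∈ F` with `a ∉ A₀`, hence `b, c ∈ A₀`. For a
vertex `x` outside a few fixed members, the members through `x` are split by their traces on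
`{a, b, c}`; each class consists of `k`-sets containing a fixed set, avoiding another, and meeting
one or two fixed members of `F`, and is counted by inclusion–exclusion. According to whether
`{b, c}` is a cover, and otherwise whether `A₀` is the only member avoiding `a`, the counts add up
to at most `C(n-2, k-2) - C(n-k-2, k-2)`, contradicting the minimum degree. The binomial
estimates behind this need `n ≥ 4k²`; the main one, `C(n-4, k-3) ≤ 2 C(n-k-3, k-3)`, follows
from `(t + s)^d ≤ 2 t^d` for `2ds ≤ t`.
-/

open Finset

namespace Nat

theorem add_pow_le_two_mul_pow {s t d : ℕ} (h : 2 * d * s ≤ t) : (t + s) ^ d ≤ 2 * t ^ d := by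
  have key : ∀ e, 2 * e * s ≤ t → t * (t + s) ^ e ≤ (t + 2 * e * s) * t ^ e := by
    intro e
    induction e with
    | zero => simp
    | succ e ih =>
      intro he
      have ih' := ih (le_trans (by nlinarith) he)
      have hs : 2 * e * s * s ≤ t * s := Nat.mul_le_mul_right s (by nlinarith)
      calc t * (t + s) ^ (e + 1) = t * (t + s) ^ e * (t + s) := by ring
        _ ≤ (t + 2 * e * s) * t ^ e * (t + s) := Nat.mul_le_mul_right _ ih'
        _ ≤ (t + 2 * (e + 1) * s) * t ^ (e + 1) := by
          rw [pow_succ]; nlinarith [Nat.mul_le_mul_right (t ^ e) hs]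
  rcases Nat.eq_zero_or_pos t with rfl | ht
  · rcases Nat.eq_zero_or_pos d with rfl | hd
    · simp
    · obtain rfl : s = 0 := by nlinarith
      simp [zero_pow hd.ne']
  · refine Nat.le_of_mul_le_mul_left ?_ ht
    calc t * (t + s) ^ d ≤ (t + 2 * d * s) * t ^ d := key d h
      _ ≤ t * (2 * t ^ d) := by nlinarith [Nat.mul_le_mul_right (t ^ d) h]

theorem choose_le_two_mul_choose_sub {m r d : ℕ} (h : d + r + 2 * r * (d + r) ≤ m) :
    m.choose r ≤ 2 * (m - d).choose r := by
  refine Nat.le_of_mul_le_mul_left ?_ (factorial_pos r)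
  rw [← descFactorial_eq_factorial_mul_choose, mul_left_comm,
    ← descFactorial_eq_factorial_mul_choose]
  calc m.descFactorial r ≤ (m - (d + r) + (d + r)) ^ r := by
        rw [Nat.sub_add_cancel (by omega)]; exact descFactorial_le_pow m r
    _ ≤ 2 * (m - (d + r)) ^ r := add_pow_le_two_mul_pow (by omega)
    _ ≤ 2 * (m - d).descFactorial r := by
        gcongr
        exact (Nat.pow_le_pow_left (by omega) r).trans (pow_sub_le_descFactorial (m - d) r)

theorem succ_choose_le_choose_succ {a r : ℕ} (h : (a + 1) * (r + 1) ≤ (a - r) * (a + 1 - r)) :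
    (a + 1).choose r ≤ a.choose (r + 1) := by
  rcases le_or_gt r a with hr | hr
  · refine Nat.le_of_mul_le_mul_right (c := (a + 1 - r) * (r + 1)) ?_
      (Nat.mul_pos (by omega) (by omega))
    calc (a + 1).choose r * ((a + 1 - r) * (r + 1))
        = a.choose r * ((a + 1) * (r + 1)) := by rw [← mul_assoc, ← choose_mul_succ_eq]; ring
      _ ≤ a.choose r * ((a - r) * (a + 1 - r)) := Nat.mul_le_mul_left _ h
      _ = a.choose (r + 1) * ((a + 1 - r) * (r + 1)) := by
        rw [← mul_assoc, ← choose_succ_right_eq]; ring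
  · obtain rfl | hr := (Nat.succ_le_of_lt hr).eq_or_lt
    · simp at h
    · simp [choose_eq_zero_of_lt hr]

theorem choose_sub_two_eq {n k : ℕ} (hk : 3 ≤ k) (hn : 4 ≤ n) :
    (n - 2).choose (k - 2) =
      (n - 3).choose (k - 3) + (n - 4).choose (k - 3) + (n - 4).choose (k - 2) := by
  obtain ⟨j, rfl⟩ : ∃ j, k = j + 3 := ⟨k - 3, by omega⟩
  obtain ⟨m, rfl⟩ : ∃ m, n = m + 4 := ⟨n - 4, by omega⟩
  simp only [show m + 4 - 2 = m + 1 + 1 by omega, show j + 3 - 2 = j + 1 by omega,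
    Nat.add_sub_cancel, show m + 4 - 3 = m + 1 by omega]
  rw [choose_succ_succ', choose_succ_succ' m, add_assoc]

theorem choose_sub_four_add_choose_le {n k : ℕ} (hk : 4 ≤ k) (hn : 4 * k ^ 2 ≤ n) :
    (n - 4).choose (k - 3) + (n - k - 2).choose (k - 2) ≤ (n - 4).choose (k - 2) := by
  obtain ⟨r, rfl⟩ : ∃ r, k = r + 4 := ⟨k - 4, by omega⟩
  have hn6 : r + 6 ≤ n := by nlinarith
  obtain ⟨t, rfl⟩ : ∃ t, n = t + r + 6 := ⟨n - r - 6, by omega⟩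
  simp only [show t + r + 6 - 4 = t + r + 1 + 1 by omega, show r + 4 - 3 = r + 1 by omega,
    show t + r + 6 - (r + 4) - 2 = t by omega, show r + 4 - 2 = r + 1 + 1 by omega]
  have hup : (t + r + 1).choose r ≤ (t + r).choose (r + 1) := by
    apply succ_choose_le_choose_succ
    simp only [show t + r - r = t by omega, show t + r + 1 - r = t + 1 by omega]
    have h : 2 * (r + 1) ≤ t := by nlinarith
    nlinarith [Nat.mul_le_mul_right t h, Nat.mul_le_mul_right (r + 1) h]
  have hmono : t.choose (r + 1 + 1) ≤ (t + r).choose (r + 1 + 1) := choose_le_choose _ (by omega)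
  rw [choose_succ_succ' (t + r + 1) r, choose_succ_succ' (t + r + 1) (r + 1),
    choose_succ_succ' (t + r) (r + 1)]
  omega

theorem choose_sub_four_add_choose_le_choose_add_choose {n k : ℕ} (hk : 4 ≤ k)
    (hn : 4 * k ^ 2 ≤ n) :
    (n - 4).choose (k - 3) + (n - k - 3).choose (k - 2) ≤
      (n - k - 2).choose (k - 2) + (n - k - 3).choose (k - 3) := by
  obtain ⟨r, rfl⟩ : ∃ r, k = r + 4 := ⟨k - 4, by omega⟩
  have hn7 : r + 7 ≤ n := by nlinarith
  obtain ⟨t, rfl⟩ : ∃ t, n = t + r + 7 := ⟨n - r - 7, by omega⟩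
  simp only [show t + r + 7 - 4 = t + r + 3 by omega, show r + 4 - 3 = r + 1 by omega,
    show t + r + 7 - (r + 4) - 3 = t by omega, show t + r + 7 - (r + 4) - 2 = t + 1 by omega,
    show r + 4 - 2 = r + 1 + 1 by omega]
  have hratio : (t + r + 3).choose (r + 1) ≤ 2 * (t + r + 3 - (r + 3)).choose (r + 1) :=
    choose_le_two_mul_choose_sub (by nlinarith)
  rw [show t + r + 3 - (r + 3) = t by omega] at hratio
  rw [choose_succ_succ' t (r + 1)]
  omega

end Nat

theorem exists_notMem_of_card_lt {α : Type*} [Fintype α] {s : Finset α}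
    (h : #s < Fintype.card α) : ∃ x, x ∉ s := by
  obtain ⟨x, -, hx⟩ := exists_mem_notMem_of_card_lt_card (s := s) (t := univ) (by rwa [card_univ])
  exact ⟨x, hx⟩

theorem succ_le_card_union_of_ne {α : Type*} [DecidableEq α] {A B : Finset α} {k : ℕ}
    (hA : #A = k) (hB : #B = k) (h : A ≠ B) : k + 1 ≤ #(A ∪ B) := by
  by_contra! hlt
  have hUA := eq_of_subset_of_card_le (show A ⊆ A ∪ B from subset_union_left) (by omega)
  have hUB := eq_of_subset_of_card_le (show B ⊆ A ∪ B from subset_union_right) (by omega)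
  exact h (hUA.trans hUB.symm)

theorem exists_eq_pair_of_card_eq_two {α : Type*} [DecidableEq α] {S : Finset α} {a : α}
    (hS : #S = 2) (ha : a ∈ S) : ∃ b, b ≠ a ∧ S = {a, b} := by
  obtain ⟨x, y, hxy, rfl⟩ := card_eq_two.1 hS
  rcases mem_insert.1 ha with rfl | ha
  · exact ⟨y, hxy.symm, rfl⟩
  · rw [mem_singleton.1 ha]; exact ⟨x, hxy, pair_comm x y⟩

theorem card_filter_mem_eq {α : Type*} [DecidableEq α] (F : Finset (Finset α)) (x a b c : α) :
    #{A ∈ F | x ∈ A} = #{A ∈ F | x ∈ A ∧ a ∈ A ∧ b ∈ A} +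
      #{A ∈ F | x ∈ A ∧ a ∈ A ∧ b ∉ A ∧ c ∈ A} + #{A ∈ F | x ∈ A ∧ a ∈ A ∧ b ∉ A ∧ c ∉ A} +
      #{A ∈ F | x ∈ A ∧ a ∉ A} := by
  simp only [card_filter, ← sum_add_distrib]
  refine sum_congr rfl fun A _ => ?_
  by_cases x ∈ A <;> by_cases a ∈ A <;> by_cases b ∈ A <;> by_cases c ∈ A <;> simp [*]

section Counting

variable {α : Type*} [Fintype α] [DecidableEq α] {k : ℕ} {R W : Finset α}

def kSetsContainingAvoiding (k : ℕ) (R W : Finset α) : Finset (Finset α) :=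
  {A ∈ powersetCard k univ | R ⊆ A ∧ Disjoint A W}

@[simp]
theorem mem_kSetsContainingAvoiding {A : Finset α} :
    A ∈ kSetsContainingAvoiding k R W ↔ #A = k ∧ R ⊆ A ∧ Disjoint A W := by
  simp [kSetsContainingAvoiding]

theorem card_kSetsContainingAvoiding {m j : ℕ} (hRW : Disjoint R W)
    (hm : #R + #W + m = Fintype.card α) (hj : #R + j = k) :
    #(kSetsContainingAvoiding k R W) = m.choose j := by
  have hcompl : #(R ∪ W)ᶜ = m := by rw [card_compl, card_union_of_disjoint hRW]; omega
  rw [← hcompl, ← card_powersetCard]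
  apply card_nbij' (· \ R) (· ∪ R)
  · intro A hA
    obtain ⟨hAk, hRA, hAW⟩ := mem_kSetsContainingAvoiding.1 hA
    rw [mem_coe, mem_powersetCard]
    refine ⟨fun x hx => ?_, by rw [card_sdiff_of_subset hRA]; omega⟩
    simp only [mem_sdiff, mem_compl, mem_union] at hx ⊢
    exact fun h => h.elim hx.2 (disjoint_left.1 hAW hx.1)
  · intro B hB
    obtain ⟨hBRW, hBk⟩ := mem_powersetCard.1 hB
    rw [mem_coe, mem_kSetsContainingAvoiding]
    have hBR : Disjoint B R := disjoint_left.2 fun x hx hxR => by simpa [hxR] using hBRW hx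
    have hBW : Disjoint B W := disjoint_left.2 fun x hx hxW => by simpa [hxW] using hBRW hx
    exact ⟨by rw [card_union_of_disjoint hBR]; omega, subset_union_right,
      disjoint_union_left.2 ⟨hBW, hRW⟩⟩
  · intro A hA
    exact sdiff_union_of_subset (mem_kSetsContainingAvoiding.1 hA).2.1
  · intro B hB
    refine union_sdiff_cancel_right (disjoint_left.2 fun x hx hxR => ?_)
    simpa [hxR] using (mem_powersetCard.1 hB).1 hx

theorem kSetsContainingAvoiding_anti {W' : Finset α} (h : W ⊆ W') :
    kSetsContainingAvoiding k R W' ⊆ kSetsContainingAvoiding k R W := fun A hA => by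
  simp only [mem_kSetsContainingAvoiding] at hA ⊢
  exact ⟨hA.1, hA.2.1, hA.2.2.mono_right h⟩

theorem kSetsContainingAvoiding_inter {B B' : Finset α} :
    kSetsContainingAvoiding k R B ∩ kSetsContainingAvoiding k R B' =
      kSetsContainingAvoiding k R (B ∪ B') := by
  ext A
  simp only [mem_inter, mem_kSetsContainingAvoiding, disjoint_union_right]
  tauto

variable {F : Finset (Finset α)} {m j : ℕ} {p : Finset α → Prop} [DecidablePred p]

theorem filter_subset_kSetsContainingAvoiding (huniform : ∀ A ∈ F, #A = k)
    (hp : ∀ A ∈ F, p A → R ⊆ A ∧ Disjoint A W) :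
    F.filter p ⊆ kSetsContainingAvoiding k R W := fun A hA => by
  rw [mem_filter] at hA
  exact mem_kSetsContainingAvoiding.2 ⟨huniform A hA.1, hp A hA.1 hA.2⟩

theorem card_filter_le_choose (huniform : ∀ A ∈ F, #A = k)
    (hp : ∀ A ∈ F, p A → R ⊆ A ∧ Disjoint A W) (hRW : Disjoint R W)
    (hm : #R + #W + m = Fintype.card α) (hj : #R + j = k) :
    #(F.filter p) ≤ m.choose j :=
  card_kSetsContainingAvoiding hRW hm hj ▸
    card_le_card (filter_subset_kSetsContainingAvoiding huniform hp)

/-- Members of `F` meet `B` and `B'`, so they avoid the `k`-sets missing either one, and the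
`k`-sets missing both are those missing `B ∪ B'`. With `B = B'` this is the one-member bound. -/
theorem card_filter_add_choose_add_choose_le {B B' : Finset α} {mB mB' mU : ℕ}
    (huniform : ∀ A ∈ F, #A = k) (hintersecting : ∀ A ∈ F, ∀ B ∈ F, (A ∩ B).Nonempty)
    (hB : B ∈ F) (hB' : B' ∈ F) (hWB : W ⊆ B) (hWB' : W ⊆ B')
    (hRB : Disjoint R B) (hRB' : Disjoint R B') (hp : ∀ A ∈ F, p A → R ⊆ A ∧ Disjoint A W)
    (hm : #R + #W + m = Fintype.card α) (hmB : #R + #B + mB = Fintype.card α)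
    (hmB' : #R + #B' + mB' = Fintype.card α) (hmU : Fintype.card α ≤ #R + #(B ∪ B') + mU)
    (hj : #R + j = k) :
    #(F.filter p) + mB.choose j + mB'.choose j ≤ m.choose j + mU.choose j := by
  set X := kSetsContainingAvoiding k R W
  set Y := kSetsContainingAvoiding k R B
  set Y' := kSetsContainingAvoiding k R B'
  have hYX : Y ∪ Y' ⊆ X :=
    union_subset (kSetsContainingAvoiding_anti hWB) (kSetsContainingAvoiding_anti hWB')
  have hmeets : ∀ A ∈ F, ∀ C ∈ F, A ∉ kSetsContainingAvoiding k R C := fun A hA C hC hAC =>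
    not_disjoint_iff_nonempty_inter.2 (hintersecting A hA C hC)
      (mem_kSetsContainingAvoiding.1 hAC).2.2
  have hsub : F.filter p ⊆ X \ (Y ∪ Y') := fun A hA => by
    obtain ⟨hAF, -⟩ := mem_filter.1 hA
    exact mem_sdiff.2 ⟨filter_subset_kSetsContainingAvoiding huniform hp hA,
      notMem_union.2 ⟨hmeets A hAF B hB, hmeets A hAF B' hB'⟩⟩
  have hRU : Disjoint R (B ∪ B') := disjoint_union_right.2 ⟨hRB, hRB'⟩
  have hU : #R + #(B ∪ B') ≤ Fintype.card α := by
    rw [← card_union_of_disjoint hRU]; exact card_le_univ _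
  have hcardU : #(Y ∩ Y') ≤ mU.choose j := by
    rw [kSetsContainingAvoiding_inter,
      card_kSetsContainingAvoiding hRU (m := Fintype.card α - (#R + #(B ∪ B'))) (by omega) hj]
    exact Nat.choose_le_choose _ (by omega)
  have h1 := card_le_card hsub
  rw [card_sdiff_of_subset hYX] at h1
  have h2 := card_union_add_card_inter Y Y'
  have h3 := card_le_card hYX
  rw [card_kSetsContainingAvoiding (hRB.mono_right hWB) hm hj] at h1 h3
  rw [card_kSetsContainingAvoiding hRB hmB hj, card_kSetsContainingAvoiding hRB' hmB' hj] at h2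
  omega

end Counting

section Covers

variable {α : Type*} [DecidableEq α]

def IsCover (F : Finset (Finset α)) (S : Finset α) : Prop :=
  ∀ A ∈ F, (S ∩ A).Nonempty

variable {F : Finset (Finset α)} {k : ℕ}

theorem isCover_pair_iff {a b : α} :
    IsCover F {a, b} ↔ ∀ A ∈ F, a ∈ A ∨ b ∈ A := by
  simp [IsCover, Finset.Nonempty]

theorem mem_of_isCover_subset {S G : Finset α}
    (hintersecting : ∀ A ∈ F, ∀ B ∈ F, (A ∩ B).Nonempty)
    (hmaximal : ∀ G : Finset α, #G = k → G ∉ F →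
      ¬ (∀ A ∈ insert G F, ∀ B ∈ insert G F, (A ∩ B).Nonempty))
    (hk : 0 < k) (hS : IsCover F S) (hSG : S ⊆ G) (hG : #G = k) : G ∈ F := by
  by_contra hGF
  refine hmaximal G hG hGF fun A hA B hB => ?_
  rcases mem_insert.1 hA with rfl | hAF <;> rcases mem_insert.1 hB with rfl | hBF
  · rw [inter_self, ← card_pos]; omega
  · exact (hS B hBF).mono (inter_subset_inter_right hSG)
  · rw [inter_comm]; exact (hS A hAF).mono (inter_subset_inter_right hSG)
  · exact hintersecting A hAF B hBF

theorem IsCover.inter_nonempty [Fintype α] {S T : Finset α}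
    (hintersecting : ∀ A ∈ F, ∀ B ∈ F, (A ∩ B).Nonempty)
    (hmaximal : ∀ G : Finset α, #G = k → G ∉ F →
      ¬ (∀ A ∈ insert G F, ∀ B ∈ insert G F, (A ∩ B).Nonempty))
    (hS : IsCover F S) (hT : IsCover F T) (hk : 0 < k) (hSk : #S ≤ k)
    (hn : k + #T ≤ Fintype.card α) : (S ∩ T).Nonempty := by
  by_contra hST
  rw [not_nonempty_iff_eq_empty, ← disjoint_iff_inter_eq_empty] at hST
  obtain ⟨G, hSG, hGT, hG⟩ := exists_subsuperset_card_eq (subset_compl_iff_disjoint_right.2 hST)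
    hSk (by rw [card_compl]; omega)
  obtain ⟨y, hy⟩ := hT G (mem_of_isCover_subset hintersecting hmaximal hk hS hSG hG)
  rw [mem_inter] at hy
  exact mem_compl.1 (hGT hy.2) hy.1

end Covers

section DegreeBounds

variable {α : Type*} [Fintype α] [DecidableEq α] {F : Finset (Finset α)} {k : ℕ} {a b c x : α}

theorem card_filter_mem_le (huniform : ∀ A ∈ F, #A = k) (hk : 3 ≤ k)
    (hxa : x ≠ a) (hxb : x ≠ b) (hxc : x ≠ c) (hab : a ≠ b) (hac : a ≠ c) (hbc : b ≠ c) :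
    #{A ∈ F | x ∈ A} ≤ (Fintype.card α - 3).choose (k - 3) +
      (Fintype.card α - 4).choose (k - 3) + #{A ∈ F | x ∈ A ∧ a ∈ A ∧ b ∉ A ∧ c ∉ A} +
      #{A ∈ F | x ∈ A ∧ a ∉ A} := by
  have h3 : #{x, a, b} = 3 := card_eq_three.2 ⟨x, a, b, hxa, hxb, hab, rfl⟩
  have h3' : #{x, a, c} = 3 := card_eq_three.2 ⟨x, a, c, hxa, hxc, hac, rfl⟩
  have hb : b ∉ ({x, a, c} : Finset α) := by simp [hxb.symm, hab.symm, hbc]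
  have hn : 4 ≤ Fintype.card α := by
    simpa [card_insert_of_notMem hb, h3'] using card_le_univ (insert b {x, a, c})
  have hP1 : #{A ∈ F | x ∈ A ∧ a ∈ A ∧ b ∈ A} ≤ (Fintype.card α - 3).choose (k - 3) :=
    card_filter_le_choose (R := {x, a, b}) (W := ∅) huniform
      (fun A _ h => ⟨by simp [insert_subset_iff, h], disjoint_empty_right A⟩)
      (disjoint_empty_right _) (by rw [h3, card_empty]; omega) (by omega)
  have hP2 : #{A ∈ F | x ∈ A ∧ a ∈ A ∧ b ∉ A ∧ c ∈ A} ≤ (Fintype.card α - 4).choose (k - 3) :=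
    card_filter_le_choose (R := {x, a, c}) (W := {b}) huniform
      (fun A _ h => ⟨by simp [insert_subset_iff, h], disjoint_singleton_right.2 h.2.2.1⟩)
      (disjoint_singleton_right.2 hb) (by rw [h3', card_singleton]; omega) (by omega)
  have := card_filter_mem_eq F x a b c
  omega

theorem exists_card_filter_mem_le_of_triangle (huniform : ∀ A ∈ F, #A = k) (hk : 4 ≤ k)
    (hn : 4 * k ^ 2 ≤ Fintype.card α) (hab : a ≠ b) (hac : a ≠ c) (hbc : b ≠ c)
    (hcab : IsCover F {a, b}) (hcac : IsCover F {a, c}) (hcbc : IsCover F {b, c}) :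
    ∃ x, #{A ∈ F | x ∈ A} ≤
      (Fintype.card α - 2).choose (k - 2) - (Fintype.card α - k - 2).choose (k - 2) := by
  have hkn : k + 4 ≤ Fintype.card α := by nlinarith
  obtain ⟨x, hx⟩ := exists_notMem_of_card_lt (s := {a, b, c}) (card_le_three.trans_lt (by omega))
  simp only [mem_insert, mem_singleton, not_or] at hx
  obtain ⟨hxa, hxb, hxc⟩ := hx
  refine ⟨x, ?_⟩
  have hP3 : #{A ∈ F | x ∈ A ∧ a ∈ A ∧ b ∉ A ∧ c ∉ A} = 0 := by
    rw [card_eq_zero, filter_eq_empty_iff]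
    rintro A hA ⟨-, -, hbA, hcA⟩
    exact (isCover_pair_iff.1 hcbc A hA).elim hbA hcA
  have hP4 : #{A ∈ F | x ∈ A ∧ a ∉ A} ≤ (Fintype.card α - 4).choose (k - 3) := by
    refine card_filter_le_choose (R := {x, b, c}) (W := {a}) huniform
      (fun A hA h => ⟨?_, disjoint_singleton_right.2 h.2⟩) (by simp [Ne.symm hxa, hab, hac])
      (by rw [card_eq_three.2 ⟨x, b, c, hxb, hxc, hbc, rfl⟩, card_singleton]; omega)
      (by rw [card_eq_three.2 ⟨x, b, c, hxb, hxc, hbc, rfl⟩]; omega)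
    have hbA := (isCover_pair_iff.1 hcab A hA).resolve_left h.2
    have hcA := (isCover_pair_iff.1 hcac A hA).resolve_left h.2
    simp [insert_subset_iff, h.1, hbA, hcA]
  have hd := card_filter_mem_le huniform (by omega) hxa hxb hxc hab hac hbc
  have hpascal := Nat.choose_sub_two_eq (n := Fintype.card α) (k := k) (by omega) (by omega)
  have hineq := Nat.choose_sub_four_add_choose_le hk hn
  omega

theorem card_filter_mem_mem_notMem_notMem_add_le {B B' : Finset α} {mU : ℕ}
    (huniform : ∀ A ∈ F, #A = k) (hintersecting : ∀ A ∈ F, ∀ B ∈ F, (A ∩ B).Nonempty)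
    (hk : 2 ≤ k) (hn : k + 2 ≤ Fintype.card α) (hxa : x ≠ a) (hbc : b ≠ c)
    (hcab : IsCover F {a, b}) (hcac : IsCover F {a, c}) (hB : B ∈ F) (hB' : B' ∈ F)
    (hxB : x ∉ B) (haB : a ∉ B) (hxB' : x ∉ B') (haB' : a ∉ B')
    (hmU : Fintype.card α ≤ 2 + #(B ∪ B') + mU) :
    #{A ∈ F | x ∈ A ∧ a ∈ A ∧ b ∉ A ∧ c ∉ A} + 2 * (Fintype.card α - k - 2).choose (k - 2) ≤
      (Fintype.card α - 4).choose (k - 2) + mU.choose (k - 2) := by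
  have hbB := (isCover_pair_iff.1 hcab B hB).resolve_left haB
  have hcB := (isCover_pair_iff.1 hcac B hB).resolve_left haB
  have hbB' := (isCover_pair_iff.1 hcab B' hB').resolve_left haB'
  have hcB' := (isCover_pair_iff.1 hcac B' hB').resolve_left haB'
  have h2 : #{x, a} = 2 := card_pair hxa
  have := card_filter_add_choose_add_choose_le (p := fun A => x ∈ A ∧ a ∈ A ∧ b ∉ A ∧ c ∉ A)
    (R := {x, a}) (W := {b, c}) (j := k - 2) (m := Fintype.card α - 4)
    (mB := Fintype.card α - k - 2) (mB' := Fintype.card α - k - 2)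
    huniform hintersecting hB hB' (by simp [insert_subset_iff, hbB, hcB])
    (by simp [insert_subset_iff, hbB', hcB']) (by simp [hxB, haB]) (by simp [hxB', haB'])
    (fun A _ h => ⟨by simp [insert_subset_iff, h], by simp [h]⟩)
    (by rw [h2, card_pair hbc]; omega) (by rw [h2, huniform B hB]; omega)
    (by rw [h2, huniform B' hB']; omega) (by rwa [h2]) (by omega)
  omega

theorem card_filter_mem_notMem_add_le {B : Finset α}
    (huniform : ∀ A ∈ F, #A = k) (hintersecting : ∀ A ∈ F, ∀ B ∈ F, (A ∩ B).Nonempty)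
    (hk : 3 ≤ k) (hn : k + 3 ≤ Fintype.card α) (hxb : x ≠ b) (hxc : x ≠ c) (hbc : b ≠ c)
    (hcab : IsCover F {a, b}) (hcac : IsCover F {a, c}) (hB : B ∈ F)
    (hxB : x ∉ B) (hbB : b ∉ B) (hcB : c ∉ B) :
    #{A ∈ F | x ∈ A ∧ a ∉ A} + (Fintype.card α - k - 3).choose (k - 3) ≤
      (Fintype.card α - 4).choose (k - 3) := by
  have haB := (isCover_pair_iff.1 hcab B hB).resolve_right hbB
  have h3 : #{x, b, c} = 3 := card_eq_three.2 ⟨x, b, c, hxb, hxc, hbc, rfl⟩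
  have := card_filter_add_choose_add_choose_le (p := fun A => x ∈ A ∧ a ∉ A)
    (R := {x, b, c}) (W := {a}) (j := k - 3) (m := Fintype.card α - 4)
    (mB := Fintype.card α - k - 3) (mB' := Fintype.card α - k - 3)
    (mU := Fintype.card α - k - 3) huniform hintersecting hB hB (by simp [haB]) (by simp [haB])
    (by simp [hxB, hbB, hcB]) (by simp [hxB, hbB, hcB])
    (fun A hA h => ⟨by simp [insert_subset_iff, h.1,
      (isCover_pair_iff.1 hcab A hA).resolve_left h.2,
      (isCover_pair_iff.1 hcac A hA).resolve_left h.2], by simp [h.2]⟩)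
    (by rw [h3, card_singleton]; omega) (by rw [h3, huniform B hB]; omega)
    (by rw [h3, huniform B hB]; omega) (by rw [h3, union_self, huniform B hB]; omega)
    (by omega)
  omega

theorem exists_card_filter_mem_le_of_unique_avoiding {A₀ : Finset α}
    (huniform : ∀ A ∈ F, #A = k) (hintersecting : ∀ A ∈ F, ∀ B ∈ F, (A ∩ B).Nonempty)
    (hk : 3 ≤ k) (hn : k + 4 ≤ Fintype.card α) (hab : a ≠ b) (hac : a ≠ c) (hbc : b ≠ c)
    (hcab : IsCover F {a, b}) (hcac : IsCover F {a, c}) (hA₀ : A₀ ∈ F) (haA₀ : a ∉ A₀)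
    (huniq : ∀ A ∈ F, a ∉ A → A = A₀) :
    ∃ x, #{A ∈ F | x ∈ A} ≤
      (Fintype.card α - 2).choose (k - 2) - (Fintype.card α - k - 2).choose (k - 2) := by
  have hU : #({a, b, c} ∪ A₀) < Fintype.card α := by
    have := card_union_le {a, b, c} A₀
    have := card_le_three (a := a) (b := b) (c := c)
    rw [huniform A₀ hA₀] at *
    omega
  obtain ⟨x, hx⟩ := exists_notMem_of_card_lt hU
  simp only [mem_union, mem_insert, mem_singleton, not_or] at hx
  obtain ⟨⟨hxa, hxb, hxc⟩, hxA₀⟩ := hx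
  refine ⟨x, ?_⟩
  have hP3 := card_filter_mem_mem_notMem_notMem_add_le (mU := Fintype.card α - k - 2) huniform
    hintersecting (by omega) (by omega) hxa hbc hcab hcac hA₀ hA₀ hxA₀ haA₀ hxA₀ haA₀
    (by rw [union_self, huniform A₀ hA₀]; omega)
  have hP4 : #{A ∈ F | x ∈ A ∧ a ∉ A} = 0 := by
    rw [card_eq_zero, filter_eq_empty_iff]
    rintro A hA ⟨hxA, haA⟩
    exact hxA₀ (huniq A hA haA ▸ hxA)
  have hd := card_filter_mem_le huniform hk hxa hxb hxc hab hac hbc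
  have hpascal := Nat.choose_sub_two_eq (n := Fintype.card α) (k := k) hk (by omega)
  omega

theorem exists_card_filter_mem_le_of_two_avoiding {A₀ A₀' B₁ : Finset α}
    (huniform : ∀ A ∈ F, #A = k) (hintersecting : ∀ A ∈ F, ∀ B ∈ F, (A ∩ B).Nonempty)
    (hk : 4 ≤ k) (hn : 4 * k ^ 2 ≤ Fintype.card α) (hab : a ≠ b) (hac : a ≠ c) (hbc : b ≠ c)
    (hcab : IsCover F {a, b}) (hcac : IsCover F {a, c}) (hA₀ : A₀ ∈ F) (haA₀ : a ∉ A₀)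
    (hA₀' : A₀' ∈ F) (haA₀' : a ∉ A₀') (hne : A₀ ≠ A₀') (hB₁ : B₁ ∈ F) (hbB₁ : b ∉ B₁)
    (hcB₁ : c ∉ B₁) :
    ∃ x, #{A ∈ F | x ∈ A} ≤
      (Fintype.card α - 2).choose (k - 2) - (Fintype.card α - k - 2).choose (k - 2) := by
  have hkn : 3 * k + 4 ≤ Fintype.card α := by nlinarith
  have hU : #({a, b, c} ∪ (A₀ ∪ A₀' ∪ B₁)) < Fintype.card α := by
    have := card_union_le {a, b, c} (A₀ ∪ A₀' ∪ B₁)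
    have := card_union_le (A₀ ∪ A₀') B₁
    have := card_union_le A₀ A₀'
    have := card_le_three (a := a) (b := b) (c := c)
    rw [huniform A₀ hA₀, huniform A₀' hA₀', huniform B₁ hB₁] at *
    omega
  obtain ⟨x, hx⟩ := exists_notMem_of_card_lt hU
  simp only [mem_union, mem_insert, mem_singleton, not_or] at hx
  obtain ⟨⟨hxa, hxb, hxc⟩, ⟨hxA₀, hxA₀'⟩, hxB₁⟩ := hx
  refine ⟨x, ?_⟩
  have hunion := succ_le_card_union_of_ne (huniform A₀ hA₀) (huniform A₀' hA₀') hne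
  have hP3 := card_filter_mem_mem_notMem_notMem_add_le (mU := Fintype.card α - k - 3) huniform
    hintersecting (by omega) (by omega) hxa hbc hcab hcac hA₀ hA₀' hxA₀ haA₀ hxA₀' haA₀'
    (by omega)
  have hP4 := card_filter_mem_notMem_add_le huniform hintersecting (by omega) (by omega) hxb hxc
    hbc hcab hcac hB₁ hxB₁ hbB₁ hcB₁
  have hd := card_filter_mem_le huniform (by omega) hxa hxb hxc hab hac hbc
  have hpascal := Nat.choose_sub_two_eq (n := Fintype.card α) (k := k) (by omega) (by omega)
  have hineq := Nat.choose_sub_four_add_choose_le_choose_add_choose hk hn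
  omega

theorem exists_card_filter_mem_le {A₀ : Finset α}
    (huniform : ∀ A ∈ F, #A = k) (hintersecting : ∀ A ∈ F, ∀ B ∈ F, (A ∩ B).Nonempty)
    (hk : 4 ≤ k) (hn : 4 * k ^ 2 ≤ Fintype.card α) (hab : a ≠ b) (hac : a ≠ c) (hbc : b ≠ c)
    (hcab : IsCover F {a, b}) (hcac : IsCover F {a, c}) (hA₀ : A₀ ∈ F) (haA₀ : a ∉ A₀) :
    ∃ x, #{A ∈ F | x ∈ A} ≤
      (Fintype.card α - 2).choose (k - 2) - (Fintype.card α - k - 2).choose (k - 2) := by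
  by_cases hcbc : IsCover F {b, c}
  · exact exists_card_filter_mem_le_of_triangle huniform hk hn hab hac hbc hcab hcac hcbc
  obtain ⟨B₁, hB₁, hbB₁, hcB₁⟩ : ∃ B₁ ∈ F, b ∉ B₁ ∧ c ∉ B₁ := by
    simpa [isCover_pair_iff] using hcbc
  by_cases huniq : ∀ A ∈ F, a ∉ A → A = A₀
  · exact exists_card_filter_mem_le_of_unique_avoiding huniform hintersecting (by omega)
      (by nlinarith) hab hac hbc hcab hcac hA₀ haA₀ huniq
  push Not at huniq
  obtain ⟨A₀', hA₀', haA₀', hne⟩ := huniq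
  exact exists_card_filter_mem_le_of_two_avoiding huniform hintersecting hk hn hab hac hbc hcab
    hcac hA₀ haA₀ hA₀' haA₀' hne.symm hB₁ hbB₁ hcB₁

end DegreeBounds

theorem kernel_two_bound_general (n k : ℕ) (hk : 4 ≤ k) (hn : 4 * k ^ 2 ≤ n)
    (F : Finset (Finset (Fin n)))
    (huniform : ∀ A ∈ F, A.card = k)
    (hintersecting : ∀ A ∈ F, ∀ B ∈ F, (A ∩ B).Nonempty)
    (hmaximal : ∀ G : Finset (Fin n), G.card = k → G ∉ F →
      ¬ (∀ A ∈ insert G F, ∀ B ∈ insert G F, (A ∩ B).Nonempty))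
    (hdelta : ∀ x : Fin n,
      Nat.choose (n - 2) (k - 2) - Nat.choose (n - k - 2) (k - 2) <
        (F.filter (fun A => x ∈ A)).card) :
    {S : Finset (Fin n) | S.card = 2 ∧ (∀ A ∈ F, (S ∩ A).Nonempty) ∧
      ∀ S' ⊂ S, ¬ (∀ A ∈ F, (S' ∩ A).Nonempty)}.ncard ≤ 1 := by
  rw [← Fintype.card_fin n] at hn
  refine (Set.ncard_le_one (Set.toFinite _)).2 fun S ⟨hS2, hS, hSmin⟩ T ⟨hT2, hT, _⟩ => ?_
  by_contra hST
  obtain ⟨a, ha⟩ := IsCover.inter_nonempty hintersecting hmaximal hS hT (by omega) (by omega)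
    (by rw [hT2]; nlinarith)
  obtain ⟨b, hba, rfl⟩ := exists_eq_pair_of_card_eq_two hS2 (mem_inter.1 ha).1
  obtain ⟨c, hca, rfl⟩ := exists_eq_pair_of_card_eq_two hT2 (mem_inter.1 ha).2
  have hbc : b ≠ c := by rintro rfl; exact hST rfl
  obtain ⟨A₀, hA₀, haA₀⟩ : ∃ A₀ ∈ F, a ∉ A₀ := by
    by_contra! h
    exact hSmin {a} (by rw [pair_comm]; exact ssubset_insert (by simpa using hba))
      fun A hA => ⟨a, mem_inter.2 ⟨mem_singleton_self a, h A hA⟩⟩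
  obtain ⟨x, hx⟩ := exists_card_filter_mem_le huniform hintersecting hk hn hba.symm hca.symm hbc
    hS hT hA₀ haA₀
  rw [Fintype.card_fin] at hx
  exact (hdelta x).not_ge hx

/-- In the proof of Theorem 1.1: if `k ≥ 4`, `n ≥ 4k²`, and `F` is a maximal non-trivial
intersecting family of `k`-subsets of `[n]` with `δ(F) > C(n-2,k-2) - C(n-k-2,k-2)`,
then the kernel of `F` contains at most one `2`-element set. -/
theorem kernel_two_bound (n k : ℕ) (hk : 4 ≤ k) (hn : 4 * k ^ 2 ≤ n)
    (F : Finset (Finset (Fin n)))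
    (huniform : ∀ A ∈ F, A.card = k)
    (hintersecting : ∀ A ∈ F, ∀ B ∈ F, (A ∩ B).Nonempty)
    (hmaximal : ∀ G : Finset (Fin n), G.card = k → G ∉ F →
      ¬ (∀ A ∈ insert G F, ∀ B ∈ insert G F, (A ∩ B).Nonempty))
    (hnontrivial : ¬ ∃ x : Fin n, ∀ A ∈ F, x ∈ A)
    (hdelta : ∀ x : Fin n,
      Nat.choose (n - 2) (k - 2) - Nat.choose (n - k - 2) (k - 2) <
        (F.filter (fun A => x ∈ A)).card) :
    {S : Finset (Fin n) | S.card = 2 ∧ (∀ A ∈ F, (S ∩ A).Nonempty) ∧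
      ∀ S' ⊂ S, ¬ (∀ A ∈ F, (S' ∩ A).Nonempty)}.ncard ≤ 1 :=
  kernel_two_bound_general n k hk hn F huniform hintersecting hmaximal hdelta
end
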